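/- arXiv:1608.07164 — 2 statements merged into one kernel-verified Lean document; each statement's English description precedes it below -/
import Mathlib

section
/- The Petersen graph is hypohamiltonian: it has no Hamiltonian cycle, but for every vertex v, deleting v yields a graph with a Hamiltonian cycle. -/
/-!
The Petersen graph has no Hamiltonian cycle: an exhaustive depth-first search for one through a
fixed vertex, evaluated by the kernel, fails. Every permutation of `Fin 5` acts on it as an
automorphism, and these act transitively on the vertices, so for the second half it suffices to
exhibit a single Hamiltonian cycle of the graph with the vertex `{0, 1}` deleted.
-/

/-- The Petersen graph, as the Kneser graph `K(5,2)`: vertices are the 2-element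
subsets of a 5-element set, adjacent iff disjoint. -/
def petersen : SimpleGraph {s : Finset (Fin 5) // s.card = 2} where
  Adj u v := Disjoint u.1 v.1
  symm := ⟨fun u v h => h.symm⟩
  loopless := ⟨fun u h => by
    have h2 := u.2
    rw [disjoint_self.mp h] at h2
    simp at h2⟩

namespace SimpleGraph

variable {V W : Type*} {G : SimpleGraph V} {H : SimpleGraph W}

def Iso.induceNe (e : G ≃g H) (v : V) : G.induce {u | u ≠ v} ≃g H.induce {u | u ≠ e v} :=
  e.induce (e.toEquiv.bijOn fun _ => e.injective.ne_iff)

variable [DecidableEq V]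

theorem Iso.isHamiltonian [DecidableEq W] [Fintype V] [Fintype W] (e : G ≃g H)
    (hG : G.IsHamiltonian) : H.IsHamiltonian := by
  intro hcard
  obtain ⟨a, p, hp⟩ := hG (by rwa [Fintype.card_congr e.toEquiv])
  exact ⟨e a, p.map e.toHom, hp.map e.bijective⟩

theorem Walk.IsHamiltonianCycle.exists_support_eq {a : V} {p : G.Walk a a}
    (hp : p.IsHamiltonianCycle) :
    ∃ m : List V, p.support = a :: (m ++ [a]) ∧ (a :: m).Nodup ∧ ∀ x, x ∈ a :: m := by
  have htail : p.support.tail ≠ [] := by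
    rw [← p.support_tail_of_not_nil hp.isCycle.not_nil]; exact p.tail.support_ne_nil
  have hlast : p.support.tail.getLast htail = a := by
    rw [List.getLast_tail]; exact p.getLast_support
  have hsupp : p.support = a :: (p.support.tail.dropLast ++ [a]) := by
    conv_lhs => rw [← p.cons_tail_support, ← List.dropLast_concat_getLast htail, hlast]
  refine ⟨p.support.tail.dropLast, hsupp, ?_, fun x => ?_⟩
  · have := hp.isCycle.nodup_dropLast_support
    rwa [hsupp, List.dropLast_cons_of_ne_nil (by simp), List.dropLast_concat] at this
  · have := hp.mem_support x
    rw [hsupp] at this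
    grind

theorem isHamiltonian_of_isChain [Fintype V] {a : V} {m : List V} (hm : 2 ≤ m.length)
    (hchain : (a :: (m ++ [a])).IsChain G.Adj) (hnodup : (a :: m).Nodup)
    (hcover : ∀ x, x ∈ a :: m) : G.IsHamiltonian := by
  intro _
  -- `Walk.ofSupport` ends at `getLast`, which is `a` only propositionally
  obtain ⟨b, hb, p, hsupp⟩ : ∃ b, a = b ∧ ∃ p : G.Walk a b, p.support = a :: (m ++ [a]) :=
    ⟨_, by simp, Walk.ofSupport _ (List.cons_ne_nil _ _) hchain, Walk.support_ofSupport _ _⟩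
  subst hb
  have hlen : p.length = m.length + 1 := by
    have := p.length_support; simp [hsupp] at this; omega
  have hne : ¬p.Nil := by rw [← Walk.length_eq_zero_iff]; omega
  have htail : p.support.tail = m ++ [a] := by rw [hsupp, List.tail_cons]
  have hperm := List.perm_append_singleton a m
  have hnodup' : (m ++ [a]).Nodup := hperm.nodup_iff.mpr hnodup
  refine ⟨a, p,
    Walk.isHamiltonianCycle_iff_isCycle_and_support_count_tail_eq_one.mpr ⟨?_, ?_⟩⟩
  · rw [Walk.isCycle_iff_isPath_tail_and_le_length, Walk.isPath_def,
      p.support_tail_of_not_nil hne, htail]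
    exact ⟨hnodup', by omega⟩
  · intro x
    rw [htail]
    exact List.count_eq_one_of_mem hnodup' (hperm.mem_iff.mpr (hcover x))

section Search

variable [Fintype V] (G) [DecidableRel G.Adj]

/-- Depth-first search for a Hamiltonian cycle through `a`: the state `c :: t` is a path
starting at `a`, listed backwards from its current end `c`, which is to be extended by `n` more
vertices and then closed up at `a`. -/
def canCloseHamiltonianCycle (a : V) : ℕ → List V → Bool
  | 0, c :: t => decide (G.Adj c a ∧ ∀ x, x ∈ c :: t)
  | n + 1, c :: t =>
    decide (∃ x, G.Adj c x ∧ x ∉ c :: t ∧ canCloseHamiltonianCycle a n (x :: c :: t))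
  | _, [] => false

variable {G}

theorem canCloseHamiltonianCycle_eq_true_of_isChain (a : V) :
    ∀ (m : List V) (c : V) (t : List V), (t.reverse ++ c :: (m ++ [a])).IsChain G.Adj →
      (t.reverse ++ c :: m).Nodup → (∀ x, x ∈ t.reverse ++ c :: m) →
      G.canCloseHamiltonianCycle a m.length (c :: t) = true
  | [], c, t, hchain, _, hcover => by
    have hca : G.Adj c a := (List.isChain_append.mp hchain).2.1.rel
    simp only [List.length_nil, canCloseHamiltonianCycle, decide_eq_true_eq]
    exact ⟨hca, fun x => by simpa [or_comm] using hcover x⟩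
  | x :: m, c, t, hchain, hnodup, hcover => by
    have hcx : G.Adj c x := (List.isChain_append.mp hchain).2.1.rel
    have hrev : (c :: t).reverse ++ x :: m = t.reverse ++ c :: x :: m := by simp
    have hnodup' := hrev ▸ hnodup
    have hx : x ∉ c :: t := fun hxt =>
      List.disjoint_of_nodup_append hnodup' (List.mem_reverse.mpr hxt) List.mem_cons_self
    have hext := canCloseHamiltonianCycle_eq_true_of_isChain a m x (c :: t)
      (by simpa using hchain) hnodup' (hrev ▸ hcover)
    simp only [List.length_cons, canCloseHamiltonianCycle, decide_eq_true_eq]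
    exact ⟨x, hcx, hx, hext⟩

theorem not_isHamiltonian_of_canCloseHamiltonianCycle_eq_false [Nontrivial V] (a : V)
    (h : G.canCloseHamiltonianCycle a (Fintype.card V - 1) [a] = false) : ¬G.IsHamiltonian := by
  intro hG
  obtain ⟨p, hp⟩ := hG.exists_isHamiltonianCycle a
  obtain ⟨m, hsupp, hnodup, hcover⟩ := hp.exists_support_eq
  have hlen : m.length = Fintype.card V - 1 := by
    have := p.length_support; simp [hsupp, hp.length_eq] at this; omega
  have hchain : (a :: (m ++ [a])).IsChain G.Adj := hsupp ▸ p.isChain_adj_support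
  have := canCloseHamiltonianCycle_eq_true_of_isChain a m a [] hchain hnodup hcover
  rw [hlen, h] at this
  exact Bool.false_ne_true this

end Search

end SimpleGraph

instance : DecidableRel petersen.Adj := fun u v => inferInstanceAs (Decidable (Disjoint u.1 v.1))

def petersenAut (σ : Equiv.Perm (Fin 5)) : petersen ≃g petersen where
  toEquiv := σ.finsetCongr.subtypeEquiv fun s => by simp
  map_rel_iff' := Finset.disjoint_map _

theorem exists_petersenAut_apply_eq (u v : {s : Finset (Fin 5) // s.card = 2}) :
    ∃ σ, petersenAut σ u = v := by
  have := Set.powersetCard.isPretransitive (α := Fin 5) (n := 2)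
  obtain ⟨σ, hσ⟩ := MulAction.exists_smul_eq (Equiv.Perm (Fin 5))
    (Set.powersetCard.ofCard u.2) (Set.powersetCard.ofCard v.2)
  refine ⟨σ, Subtype.ext ?_⟩
  show u.1.map σ.toEmbedding = v.1
  simpa [Finset.smul_finset_def, Finset.map_eq_image] using congrArg Subtype.val hσ

set_option maxRecDepth 20000 in
theorem not_isHamiltonian_petersen : ¬petersen.IsHamiltonian :=
  have : Nontrivial {s : Finset (Fin 5) // s.card = 2} :=
    Fintype.one_lt_card_iff_nontrivial.mp (by decide)
  SimpleGraph.not_isHamiltonian_of_canCloseHamiltonianCycle_eq_false ⟨{0, 1}, rfl⟩ (by decide)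

theorem isHamiltonian_petersen_induce_ne :
    (petersen.induce {u | u ≠ ⟨{0, 1}, rfl⟩}).IsHamiltonian :=
  SimpleGraph.isHamiltonian_of_isChain (a := ⟨⟨{0, 2}, rfl⟩, by decide⟩)
    (m := List.pmap Subtype.mk
      [⟨{1, 3}, rfl⟩, ⟨{2, 4}, rfl⟩, ⟨{0, 3}, rfl⟩, ⟨{1, 4}, rfl⟩,
        ⟨{2, 3}, rfl⟩, ⟨{0, 4}, rfl⟩, ⟨{1, 2}, rfl⟩, ⟨{3, 4}, rfl⟩] (by decide))
    (by decide) (by decide) (by decide) (by decide)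

/-- The Petersen graph is hypohamiltonian: it has no Hamiltonian cycle, but
deleting any vertex yields a Hamiltonian graph. -/
theorem petersen_hypohamiltonian :
    ¬ petersen.IsHamiltonian ∧
      ∀ v, (petersen.induce {u | u ≠ v}).IsHamiltonian := by
  refine ⟨not_isHamiltonian_petersen, fun v => ?_⟩
  obtain ⟨σ, rfl⟩ := exists_petersenAut_apply_eq ⟨{0, 1}, rfl⟩ v
  exact (SimpleGraph.Iso.induceNe (petersenAut σ) _).isHamiltonian
    isHamiltonian_petersen_induce_ne
end

section
/- The Petersen graph has chromatic index 4, i.e., its edges cannot be properly coloured with 3 colours but can be properly coloured with 4 colours. -/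
/-- A proper edge colouring with colour set `α`: edges sharing a vertex get
distinct colours. -/
def ProperEdgeColouring {V : Type*} (G : SimpleGraph V) {α : Type*}
    (c : G.edgeSet → α) : Prop :=
  ∀ e f : G.edgeSet, e ≠ f → (∃ v, v ∈ (e : Sym2 V) ∧ v ∈ (f : Sym2 V)) → c e ≠ c f

/-!
In a proper 3-edge-colouring of the cubic Petersen graph every vertex sees every colour, and the
edges of one colour form a matching. Matching the six vertices avoiding `4` into the four
containing it is impossible, so every colour occurs on one of the three edges inside
`{0,1,2,3}`, i.e. on one of the splittings `{a,b} ∣ {c,d}`: these get three distinct colours.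
The apex `{k,4}` is joined to one part of each splitting, by three distinct colours, each
different from that splitting's colour. Two bijections of `Fin 3` that disagree everywhere
differ by a constant modulo 3 (the differences are nonzero and sum to zero), so the apex
colours are the splitting colours shifted by some `σ k`. Two apexes have a common neighbour,
forcing `σ k ≠ σ k'`: four distinct shifts in three colours.
-/

open Finset Function

section EdgeColouring

variable {V α : Type*} {G : SimpleGraph V} {c : G.edgeSet → α}

theorem ProperEdgeColouring.ne_of_adj (hc : ProperEdgeColouring G c) {u v w : V}
    (huv : G.Adj u v) (huw : G.Adj u w) (hvw : v ≠ w) :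
    c ⟨s(u, v), huv⟩ ≠ c ⟨s(u, w), huw⟩ :=
  hc _ _ (fun h => hvw (Sym2.congr_right.mp (congrArg Subtype.val h)))
    ⟨u, Sym2.mem_mk_left u v, Sym2.mem_mk_left u w⟩

theorem edgeColour_swap (c : G.edgeSet → α) {u v : V} (huv : G.Adj u v) :
    c ⟨s(v, u), huv.symm⟩ = c ⟨s(u, v), huv⟩ :=
  congrArg c (Subtype.ext Sym2.eq_swap)

theorem ProperEdgeColouring.exists_adj_colour_eq [Fintype α] {u : V}
    [Fintype (G.neighborSet u)] (hc : ProperEdgeColouring G c)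
    (hdeg : Fintype.card α ≤ G.degree u) (a : α) :
    ∃ v, ∃ huv : G.Adj u v, c ⟨s(u, v), huv⟩ = a := by
  let f : G.neighborSet u → α := fun v => c ⟨s(u, v), v.2⟩
  have hf : Injective f := fun v w hvw =>
    Subtype.ext (by_contra fun hne => hc.ne_of_adj v.2 w.2 hne hvw)
  have hcard : Fintype.card (G.neighborSet u) = Fintype.card α :=
    le_antisymm (Fintype.card_le_of_injective f hf) (G.card_neighborSet_eq_degree u ▸ hdeg)
  obtain ⟨v, hv⟩ := ((Fintype.bijective_iff_injective_and_card f).mpr ⟨hf, hcard⟩).2 a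
  exact ⟨v, v.2, hv⟩

theorem ProperEdgeColouring.ne_of_adj_of_eq (hc : ProperEdgeColouring G c) {u u' v v' : V}
    (huv : G.Adj u v) (hu'v' : G.Adj u' v') (hv : v = v') (hu : u ≠ u') :
    c ⟨s(u, v), huv⟩ ≠ c ⟨s(u', v'), hu'v'⟩ := by
  subst hv
  rw [← edgeColour_swap c huv, ← edgeColour_swap c hu'v']
  exact hc.ne_of_adj _ _ hu

theorem ProperEdgeColouring.card_le_card_of_forall_exists_adj (hc : ProperEdgeColouring G c)
    (a : α) {s t : Finset V}
    (h : ∀ u ∈ s, ∃ v ∈ t, ∃ huv : G.Adj u v, c ⟨s(u, v), huv⟩ = a) : #s ≤ #t := by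
  choose! f hft hadj hcol using h
  refine card_le_card_of_injOn f hft fun u hu u' hu' hff => by_contra fun hne => ?_
  exact hc.ne_of_adj_of_eq (hadj u hu) (hadj u' hu') hff hne
    ((hcol u hu).trans (hcol u' hu').symm)

end EdgeColouring

theorem sub_eq_sub_of_injective_of_forall_ne {x t : Fin 3 → Fin 3} (hx : Injective x)
    (ht : Injective t) (hne : ∀ j, x j ≠ t j) (i j : Fin 3) : x i - t i = x j - t j := by
  have hsum : ∑ j, (x j - t j) = 0 := by
    rw [sum_sub_distrib, (Finite.injective_iff_bijective.mp hx).sum_comp (fun a => a),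
      (Finite.injective_iff_bijective.mp ht).sum_comp (fun a => a), sub_self]
  have hd : ∀ j, x j - t j ≠ 0 := fun j => sub_ne_zero.mpr (hne j)
  have key : ∀ a b c : Fin 3, a ≠ 0 → b ≠ 0 → c ≠ 0 → a + b + c = 0 → a = b ∧ b = c := by
    decide
  rw [Fin.sum_univ_three] at hsum
  obtain ⟨h01, h12⟩ := key _ _ _ (hd 0) (hd 1) (hd 2) hsum
  have hconst : ∀ k, x k - t k = x 0 - t 0 := by
    intro k
    fin_cases k
    exacts [rfl, h01.symm, (h01.trans h12).symm]
  rw [hconst i, hconst j]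

abbrev PetersenVertex := {s : Finset (Fin 5) // s.card = 2}

instance inst_s1 : DecidableRel petersen.Adj :=
  fun u v => inferInstanceAs (Decidable (Disjoint u.1 v.1))

theorem petersen_degree (u : PetersenVertex) : petersen.degree u = 3 := by
  revert u; decide

theorem petersen_exists_adj_colour_eq_of_notMem {α : Type*} [Fintype α]
    (hα : Fintype.card α ≤ 3) {c : petersen.edgeSet → α} (hc : ProperEdgeColouring petersen c)
    (i : Fin 5) (a : α) :
    ∃ u v : PetersenVertex,
      i ∉ u.1 ∧ i ∉ v.1 ∧ ∃ huv : petersen.Adj u v, c ⟨s(u, v), huv⟩ = a := by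
  by_contra! h
  have hcut : #{u : PetersenVertex | i ∉ u.1} ≤ #{u : PetersenVertex | i ∈ u.1} := by
    refine hc.card_le_card_of_forall_exists_adj a fun u hu => ?_
    obtain ⟨v, huv, hv⟩ := hc.exists_adj_colour_eq (hα.trans (petersen_degree u).ge) a
    simp only [mem_filter, mem_univ, true_and] at hu ⊢
    exact ⟨v, by_contra fun hvi => h u v hu hvi huv hv, huv, hv⟩
  have hsizes : ∀ i : Fin 5, #{u : PetersenVertex | i ∈ u.1} < #{u : PetersenVertex | i ∉ u.1} := by
    decide
  exact (hcut.trans_lt (hsizes i)).false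

def splitFst : Fin 3 → PetersenVertex := ![⟨{0, 1}, rfl⟩, ⟨{0, 2}, rfl⟩, ⟨{0, 3}, rfl⟩]

def splitSnd : Fin 3 → PetersenVertex := ![⟨{2, 3}, rfl⟩, ⟨{1, 3}, rfl⟩, ⟨{1, 2}, rfl⟩]

def apex (k : Fin 4) : PetersenVertex :=
  ⟨{k.castSucc, Fin.last 4}, card_pair (Fin.castSucc_lt_last k).ne⟩

def splitPartAvoiding (j : Fin 3) (k : Fin 4) : PetersenVertex :=
  if k.castSucc ∈ (splitFst j).1 then splitSnd j else splitFst j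

theorem adj_splitFst_splitSnd (j : Fin 3) : petersen.Adj (splitFst j) (splitSnd j) := by
  revert j; decide

theorem adj_apex_splitPartAvoiding (j : Fin 3) (k : Fin 4) :
    petersen.Adj (apex k) (splitPartAvoiding j k) := by
  revert j k; decide

theorem splitPartAvoiding_injective (k : Fin 4) : Injective (splitPartAvoiding · k) := by
  revert k; decide

theorem exists_splitPartAvoiding_eq {k k' : Fin 4} (h : k ≠ k') :
    ∃ j, splitPartAvoiding j k = splitPartAvoiding j k' := by
  revert k k'; decide

theorem exists_split_of_adj {u v : PetersenVertex} (huv : petersen.Adj u v) (hu : 4 ∉ u.1)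
    (hv : 4 ∉ v.1) : ∃ j, s(u, v) = s(splitFst j, splitSnd j) := by
  have : ∀ u v : PetersenVertex, petersen.Adj u v → 4 ∉ u.1 → 4 ∉ v.1 →
      ∃ j, s(u, v) = s(splitFst j, splitSnd j) := by
    decide
  exact this u v huv hu hv

theorem exists_adj_splitPartAvoiding (j : Fin 3) (k : Fin 4) :
    ∃ w, petersen.Adj (splitPartAvoiding j k) w ∧
      w ≠ apex k ∧ s(splitPartAvoiding j k, w) = s(splitFst j, splitSnd j) := by
  revert j k; decide

theorem apex_injective : Injective apex := by decide

section ThreeColouring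

variable {α : Type*} {c : petersen.edgeSet → α}

def splitColour (c : petersen.edgeSet → α) (j : Fin 3) : α :=
  c ⟨s(splitFst j, splitSnd j), adj_splitFst_splitSnd j⟩

def apexColour (c : petersen.edgeSet → α) (k : Fin 4) (j : Fin 3) : α :=
  c ⟨s(apex k, splitPartAvoiding j k), adj_apex_splitPartAvoiding j k⟩

theorem splitColour_injective [Fintype α] (hα : Fintype.card α = 3)
    (hc : ProperEdgeColouring petersen c) : Injective (splitColour c) := by
  have hcard : Fintype.card (Fin 3) = Fintype.card α := by simp [hα]
  refine ((Fintype.bijective_iff_surjective_and_card _).mpr ⟨fun a => ?_, hcard⟩).1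
  obtain ⟨u, v, hu, hv, huv, rfl⟩ := petersen_exists_adj_colour_eq_of_notMem hα.le hc 4 a
  obtain ⟨j, hj⟩ := exists_split_of_adj huv hu hv
  exact ⟨j, congrArg c (Subtype.ext hj.symm)⟩

theorem apexColour_injective (hc : ProperEdgeColouring petersen c) (k : Fin 4) :
    Injective (apexColour c k) := fun _ _ h =>
  by_contra fun hne => hc.ne_of_adj _ _ ((splitPartAvoiding_injective k).ne hne) h

theorem apexColour_ne_splitColour (hc : ProperEdgeColouring petersen c) (k : Fin 4) (j : Fin 3) :
    apexColour c k j ≠ splitColour c j := by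
  obtain ⟨w, hw, hwk, hedge⟩ := exists_adj_splitPartAvoiding j k
  have hapex : apexColour c k j =
      c ⟨s(splitPartAvoiding j k, apex k), (adj_apex_splitPartAvoiding j k).symm⟩ :=
    (edgeColour_swap c _).symm
  have hsplit : splitColour c j = c ⟨s(splitPartAvoiding j k, w), hw⟩ :=
    congrArg c (Subtype.ext hedge.symm)
  rw [hapex, hsplit]
  exact hc.ne_of_adj _ _ hwk.symm

end ThreeColouring

theorem petersen_not_properEdgeColouring_fin_three (c : petersen.edgeSet → Fin 3) :
    ¬ ProperEdgeColouring petersen c := by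
  intro hc
  have hshift (k : Fin 4) (j : Fin 3) :
      apexColour c k j - splitColour c j = apexColour c k 0 - splitColour c 0 :=
    sub_eq_sub_of_injective_of_forall_ne (apexColour_injective hc k)
      (splitColour_injective (Fintype.card_fin 3) hc) (apexColour_ne_splitColour hc k) j 0
  have hσ : Injective fun k => apexColour c k 0 - splitColour c 0 := by
    intro k k' hkk'
    by_contra hne
    obtain ⟨j, hj⟩ := exists_splitPartAvoiding_eq hne
    refine hc.ne_of_adj_of_eq (adj_apex_splitPartAvoiding j k)
      (adj_apex_splitPartAvoiding j k') hj (apex_injective.ne hne) ?_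
    exact sub_left_injective ((hshift k j).trans (hkk'.trans (hshift k' j).symm))
  simpa using Fintype.card_le_of_injective _ hσ

def fourColouring (e : petersen.edgeSet) : Fin 4 :=
  let f := e.1.map Subtype.val
  if f ∈ ({s({0, 1}, {2, 4}), s({0, 2}, {1, 4}), s({0, 4}, {2, 3}), s({1, 2}, {3, 4})} :
      Finset (Sym2 (Finset (Fin 5)))) then 1
  else if f ∈ ({s({0, 1}, {3, 4}), s({0, 3}, {1, 4}), s({0, 4}, {1, 2}), s({1, 3}, {2, 4})} :
      Finset (Sym2 (Finset (Fin 5)))) then 2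
  else if f ∈ ({s({0, 2}, {3, 4}), s({0, 3}, {2, 4}), s({0, 4}, {1, 3}), s({1, 4}, {2, 3})} :
      Finset (Sym2 (Finset (Fin 5)))) then 3
  else 0

set_option synthInstance.maxSize 2000 in
theorem properEdgeColouring_fourColouring : ProperEdgeColouring petersen fourColouring := by
  unfold ProperEdgeColouring
  decide

/-- The Petersen graph has chromatic index 4: its edges cannot be properly
coloured with 3 colours, but can be with 4 colours. -/
theorem petersen_chromaticIndex_four :
    (¬ ∃ c : petersen.edgeSet → Fin 3, ProperEdgeColouring petersen c) ∧
      (∃ c : petersen.edgeSet → Fin 4, ProperEdgeColouring petersen c) :=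
  ⟨fun ⟨c, hc⟩ => petersen_not_properEdgeColouring_fin_three c hc,
    ⟨fourColouring, properEdgeColouring_fourColouring⟩⟩
end
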